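/- arXiv:1003.1588 — 2 statements merged into one kernel-verified Lean document; each statement's English description precedes it below -/
import Mathlib

section
/- Under Łukasiewicz semantics, the knowledge base K2 is satisfiable in a witnessed fuzzy interpretation but is not satisfiable in any fuzzy interpretation with finite domain. -/
/-- ALC concepts over a single atomic concept `A` and a single role `R`. -/
inductive ALCConcept : Type where
  | atom : ALCConcept
  | top  : ALCConcept
  | bot  : ALCConcept
  | conj : ALCConcept → ALCConcept → ALCConcept
  | disj : ALCConcept → ALCConcept → ALCConcept
  | neg  : ALCConcept → ALCConcept
  | all  : ALCConcept → ALCConcept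
  | ex   : ALCConcept → ALCConcept

/-- Łukasiewicz t-norm. -/
def lukT (x y : ℝ) : ℝ := max (x + y - 1) 0
/-- Łukasiewicz t-conorm. -/
def lukS (x y : ℝ) : ℝ := min (x + y) 1
/-- Łukasiewicz implication. -/
def lukImp (x y : ℝ) : ℝ := min (1 - x + y) 1

/-- Value of a concept at a point under Łukasiewicz semantics. -/
noncomputable def lukVal {Δ : Type} (A : Δ → ℝ) (R : Δ → Δ → ℝ) : ALCConcept → Δ → ℝ
  | ALCConcept.atom, x => A x
  | ALCConcept.top, _ => 1
  | ALCConcept.bot, _ => 0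
  | ALCConcept.conj C D, x => lukT (lukVal A R C x) (lukVal A R D x)
  | ALCConcept.disj C D, x => lukS (lukVal A R C x) (lukVal A R D x)
  | ALCConcept.neg C, x => 1 - lukVal A R C x
  | ALCConcept.all C, x => ⨅ y, lukImp (R x y) (lukVal A R C y)
  | ALCConcept.ex C, x => ⨆ y, lukT (R x y) (lukVal A R C y)

/-- Degree of subsumption `(C ⊑ D)^I` under Łukasiewicz semantics. -/
noncomputable def lukSub {Δ : Type} (A : Δ → ℝ) (R : Δ → Δ → ℝ) (C D : ALCConcept) : ℝ :=
  ⨅ x, lukImp (lukVal A R C x) (lukVal A R D x)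

/-- A fuzzy interpretation: nonempty domain, values in `[0,1]`. -/
def IsInterp {Δ : Type} (A : Δ → ℝ) (R : Δ → Δ → ℝ) : Prop :=
  Nonempty Δ ∧ (∀ x, A x ∈ Set.Icc (0:ℝ) 1) ∧ (∀ x y, R x y ∈ Set.Icc (0:ℝ) 1)

/-- Witnessed interpretation under Łukasiewicz semantics. -/
def Witnessed {Δ : Type} (A : Δ → ℝ) (R : Δ → Δ → ℝ) : Prop :=
  ∀ (C D : ALCConcept) (x : Δ),
    (∃ y, lukVal A R (ALCConcept.ex C) x = lukT (R x y) (lukVal A R C y)) ∧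
    (∃ y, lukVal A R (ALCConcept.all C) x = lukImp (R x y) (lukVal A R C y)) ∧
    (∃ y, lukSub A R C D = lukImp (lukVal A R C y) (lukVal A R D y))

/-- `I` (with designated element `a`) is a model of the knowledge base `K2`. -/
def ModelK2 {Δ : Type} (A : Δ → ℝ) (R : Δ → Δ → ℝ) (a : Δ) : Prop :=
  A a = 1/2 ∧
  lukSub A R ALCConcept.top (ALCConcept.ex ALCConcept.top) = 1 ∧
  (lukSub A R (ALCConcept.all ALCConcept.atom) (ALCConcept.ex ALCConcept.atom) = 1 ∧
   lukSub A R (ALCConcept.ex ALCConcept.atom) (ALCConcept.all ALCConcept.atom) = 1) ∧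
  (lukSub A R ALCConcept.atom (ALCConcept.conj (ALCConcept.all ALCConcept.atom) (ALCConcept.all ALCConcept.atom)) = 1 ∧
   lukSub A R (ALCConcept.conj (ALCConcept.all ALCConcept.atom) (ALCConcept.all ALCConcept.atom)) ALCConcept.atom = 1)

-- basic bounds
lemma lukT_mem {x y : ℝ} (hx : x ∈ Set.Icc (0:ℝ) 1) (hy : y ∈ Set.Icc (0:ℝ) 1) :
    lukT x y ∈ Set.Icc (0:ℝ) 1 := by
  obtain ⟨hx0, hx1⟩ := hx; obtain ⟨hy0, hy1⟩ := hy
  constructor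
  · exact le_max_right _ _
  · apply max_le <;> linarith

lemma lukS_mem {x y : ℝ} (hx : x ∈ Set.Icc (0:ℝ) 1) (hy : y ∈ Set.Icc (0:ℝ) 1) :
    lukS x y ∈ Set.Icc (0:ℝ) 1 := by
  obtain ⟨hx0, hx1⟩ := hx; obtain ⟨hy0, hy1⟩ := hy
  constructor
  · apply le_min <;> linarith
  · exact min_le_right _ _

lemma lukImp_mem {x y : ℝ} (hx : x ∈ Set.Icc (0:ℝ) 1) (hy : y ∈ Set.Icc (0:ℝ) 1) :
    lukImp x y ∈ Set.Icc (0:ℝ) 1 := by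
  obtain ⟨hx0, hx1⟩ := hx; obtain ⟨hy0, hy1⟩ := hy
  constructor
  · apply le_min <;> linarith
  · exact min_le_right _ _

lemma lukImp_eq_one_iff {x y : ℝ} : lukImp x y = 1 ↔ x ≤ y := by
  unfold lukImp
  rw [min_eq_right_iff]
  constructor <;> intro h <;> linarith

lemma lukVal_mem {Δ : Type} [Nonempty Δ] {A : Δ → ℝ} {R : Δ → Δ → ℝ}
    (hA : ∀ x, A x ∈ Set.Icc (0:ℝ) 1) (hR : ∀ x y, R x y ∈ Set.Icc (0:ℝ) 1) :
    ∀ (C : ALCConcept) (x : Δ), lukVal A R C x ∈ Set.Icc (0:ℝ) 1 := by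
  intro C
  induction C with
  | atom => exact hA
  | top => intro x; simp [lukVal]
  | bot => intro x; simp [lukVal]
  | conj C D hC hD => intro x; exact lukT_mem (hC x) (hD x)
  | disj C D hC hD => intro x; exact lukS_mem (hC x) (hD x)
  | neg C hC => intro x; obtain ⟨h0, h1⟩ := hC x; constructor <;> simp [lukVal] <;> linarith
  | all C hC =>
      intro x
      have hbdd : BddBelow (Set.range fun y => lukImp (R x y) (lukVal A R C y)) :=
        ⟨0, by rintro _ ⟨y, rfl⟩; exact (lukImp_mem (hR x y) (hC y)).1⟩
      constructor
      · exact le_ciInf fun y => (lukImp_mem (hR x y) (hC y)).1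
      · obtain ⟨y⟩ := ‹Nonempty Δ›
        exact le_trans (ciInf_le hbdd y) (lukImp_mem (hR x y) (hC y)).2
  | ex C hC =>
      intro x
      have hbdd : BddAbove (Set.range fun y => lukT (R x y) (lukVal A R C y)) :=
        ⟨1, by rintro _ ⟨y, rfl⟩; exact (lukT_mem (hR x y) (hC y)).2⟩
      constructor
      · obtain ⟨y⟩ := ‹Nonempty Δ›
        exact le_trans (lukT_mem (hR x y) (hC y)).1 (le_ciSup hbdd y)
      · exact ciSup_le fun y => (lukT_mem (hR x y) (hC y)).2

lemma lukSub_eq_one_of {Δ : Type} [Nonempty Δ] {A : Δ → ℝ} {R : Δ → Δ → ℝ} {C D : ALCConcept}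
    (h : ∀ x, lukVal A R C x ≤ lukVal A R D x) : lukSub A R C D = 1 := by
  unfold lukSub
  have : ∀ x, lukImp (lukVal A R C x) (lukVal A R D x) = 1 := fun x => lukImp_eq_one_iff.mpr (h x)
  simp only [this, ciInf_const]

lemma lukSub_le {Δ : Type} {A : Δ → ℝ} {R : Δ → Δ → ℝ} {C D : ALCConcept}
    (hA : ∀ x, A x ∈ Set.Icc (0:ℝ) 1) (hR : ∀ x y, R x y ∈ Set.Icc (0:ℝ) 1) [Nonempty Δ]
    (h : lukSub A R C D = 1) : ∀ x, lukVal A R C x ≤ lukVal A R D x := by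
  intro x
  have hbdd : BddBelow (Set.range fun y => lukImp (lukVal A R C y) (lukVal A R D y)) :=
    ⟨0, by rintro _ ⟨y, rfl⟩; exact (lukImp_mem (lukVal_mem hA hR C y) (lukVal_mem hA hR D y)).1⟩
  have h1 : (1:ℝ) ≤ lukImp (lukVal A R C x) (lukVal A R D x) := h ▸ ciInf_le hbdd x
  have h2 := (lukImp_mem (lukVal_mem hA hR C x) (lukVal_mem hA hR D x)).2
  exact lukImp_eq_one_iff.mp (le_antisymm h2 h1)

-- The witnessed model
noncomputable def A0 : Option ℕ → ℝ
  | some n => 1 - (1/2)^(n+1)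
  | none => 1

def succ0 : Option ℕ → Option ℕ
  | some n => some (n+1)
  | none => none

noncomputable def R0 : Option ℕ → Option ℕ → ℝ := fun x y => if y = succ0 x then 1 else 0

lemma A0_mem : ∀ x, A0 x ∈ Set.Icc (0:ℝ) 1 := by
  intro x
  cases x with
  | none => exact ⟨zero_le_one, le_refl 1⟩
  | some n =>
      have h1 : (0:ℝ) < (1/2)^(n+1) := by positivity
      have h2 : ((1:ℝ)/2)^(n+1) ≤ 1 := by
        apply pow_le_one₀ <;> norm_num
      exact ⟨by show (0:ℝ) ≤ 1 - (1/2)^(n+1); linarith,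
             by show (1:ℝ) - (1/2)^(n+1) ≤ 1; linarith⟩

lemma R0_self (x : Option ℕ) : R0 x (succ0 x) = 1 := by simp [R0]
lemma R0_ne {x y : Option ℕ} (h : y ≠ succ0 x) : R0 x y = 0 := by simp [R0, h]

lemma R0_mem : ∀ x y, R0 x y ∈ Set.Icc (0:ℝ) 1 := by
  intro x y; unfold R0; split <;> norm_num

lemma lukVal0_mem (C : ALCConcept) (x : Option ℕ) : lukVal A0 R0 C x ∈ Set.Icc (0:ℝ) 1 :=
  lukVal_mem A0_mem R0_mem C x

lemma lukVal0_all (C : ALCConcept) (x : Option ℕ) :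
    lukVal A0 R0 (ALCConcept.all C) x = lukVal A0 R0 C (succ0 x) := by
  have key : ∀ y, lukImp (R0 x y) (lukVal A0 R0 C y)
      = if y = succ0 x then lukVal A0 R0 C (succ0 x) else 1 := by
    intro y
    by_cases h : y = succ0 x
    · subst h
      rw [if_pos rfl, R0_self, lukImp]
      have := (lukVal0_mem C (succ0 x)).2
      rw [show (1:ℝ) - 1 + lukVal A0 R0 C (succ0 x) = lukVal A0 R0 C (succ0 x) by ring]
      exact min_eq_left this
    · rw [if_neg h, R0_ne h, lukImp]
      have := (lukVal0_mem C y).1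
      exact min_eq_right (by linarith)
  show (⨅ y, lukImp (R0 x y) (lukVal A0 R0 C y)) = _
  simp only [key]
  apply le_antisymm
  · have hbdd : BddBelow (Set.range fun y : Option ℕ =>
        if y = succ0 x then lukVal A0 R0 C (succ0 x) else (1:ℝ)) := by
      refine ⟨0, ?_⟩
      rintro _ ⟨y, rfl⟩
      dsimp only
      split
      · exact (lukVal0_mem C (succ0 x)).1
      · norm_num
    have := ciInf_le hbdd (succ0 x)
    simpa using this
  · apply le_ciInf
    intro y
    split
    · exact le_refl _
    · exact (lukVal0_mem C (succ0 x)).2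

lemma lukVal0_ex (C : ALCConcept) (x : Option ℕ) :
    lukVal A0 R0 (ALCConcept.ex C) x = lukVal A0 R0 C (succ0 x) := by
  have key : ∀ y, lukT (R0 x y) (lukVal A0 R0 C y)
      = if y = succ0 x then lukVal A0 R0 C (succ0 x) else 0 := by
    intro y
    by_cases h : y = succ0 x
    · subst h
      rw [if_pos rfl, R0_self, lukT]
      have := (lukVal0_mem C (succ0 x)).1
      rw [show (1:ℝ) + lukVal A0 R0 C (succ0 x) - 1 = lukVal A0 R0 C (succ0 x) by ring]
      exact max_eq_left this
    · rw [if_neg h, R0_ne h, lukT]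
      have := (lukVal0_mem C y).2
      exact max_eq_right (by linarith)
  show (⨆ y, lukT (R0 x y) (lukVal A0 R0 C y)) = _
  simp only [key]
  apply le_antisymm
  · apply ciSup_le
    intro y
    split
    · exact le_refl _
    · exact (lukVal0_mem C (succ0 x)).1
  · have hbdd : BddAbove (Set.range fun y : Option ℕ =>
        if y = succ0 x then lukVal A0 R0 C (succ0 x) else (0:ℝ)) := by
      refine ⟨1, ?_⟩
      rintro _ ⟨y, rfl⟩
      dsimp only
      split
      · exact (lukVal0_mem C (succ0 x)).2
      · norm_num
    have := le_ciSup hbdd (succ0 x)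
    simpa using this

lemma lukVal0_tendsto (C : ALCConcept) :
    Filter.Tendsto (fun n => lukVal A0 R0 C (some n)) Filter.atTop (nhds (lukVal A0 R0 C none)) := by
  induction C with
  | atom =>
      show Filter.Tendsto (fun n => A0 (some n)) Filter.atTop (nhds (A0 none))
      simp only [A0]
      have h : Filter.Tendsto (fun n : ℕ => ((1:ℝ)/2)^(n+1)) Filter.atTop (nhds 0) := by
        have := (tendsto_pow_atTop_nhds_zero_of_lt_one (by norm_num : (0:ℝ) ≤ 1/2)
          (by norm_num : (1:ℝ)/2 < 1)).comp (Filter.tendsto_add_atTop_nat 1)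
        exact this
      have := (tendsto_const_nhds (x := (1:ℝ))).sub h
      simpa using this
  | top => simp only [lukVal]; exact tendsto_const_nhds
  | bot => simp only [lukVal]; exact tendsto_const_nhds
  | conj C D hC hD =>
      show Filter.Tendsto (fun n => lukT (lukVal A0 R0 C (some n)) (lukVal A0 R0 D (some n)))
        Filter.atTop (nhds (lukT (lukVal A0 R0 C none) (lukVal A0 R0 D none)))
      unfold lukT
      exact (((hC.add hD).sub tendsto_const_nhds).max tendsto_const_nhds)
  | disj C D hC hD =>
      show Filter.Tendsto (fun n => lukS (lukVal A0 R0 C (some n)) (lukVal A0 R0 D (some n)))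
        Filter.atTop (nhds (lukS (lukVal A0 R0 C none) (lukVal A0 R0 D none)))
      unfold lukS
      exact ((hC.add hD).min tendsto_const_nhds)
  | neg C hC =>
      show Filter.Tendsto (fun n => 1 - lukVal A0 R0 C (some n))
        Filter.atTop (nhds (1 - lukVal A0 R0 C none))
      exact tendsto_const_nhds.sub hC
  | all C hC =>
      simp only [lukVal0_all, succ0]
      exact hC.comp (Filter.tendsto_add_atTop_nat 1)
  | ex C hC =>
      simp only [lukVal0_ex, succ0]
      exact hC.comp (Filter.tendsto_add_atTop_nat 1)

lemma inf_attained (f : Option ℕ → ℝ) (hpos : ∀ x, 0 ≤ f x)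
    (htend : Filter.Tendsto (fun n => f (some n)) Filter.atTop (nhds (f none))) :
    ∃ y, f y = ⨅ x, f x := by
  set s := ⨅ x, f x with hs
  have hbdd : BddBelow (Set.range f) := ⟨0, by rintro _ ⟨y, rfl⟩; exact hpos y⟩
  by_cases h : f none = s
  · exact ⟨none, h⟩
  · have hslt : s < f none := lt_of_le_of_ne (ciInf_le hbdd none) (Ne.symm h)
    set ε := (f none - s)/2 with hε
    have hεpos : 0 < ε := by simp [hε]; linarith
    have hev : ∀ᶠ n in Filter.atTop, s + ε < f (some n) :=
      htend.eventually (eventually_gt_nhds (by simp [hε]; linarith))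
    obtain ⟨N, hN⟩ := Filter.eventually_atTop.mp hev
    obtain ⟨n₀, _, hn₀⟩ := (Finset.range (N+1)).exists_min_image (fun n => f (some n))
      ⟨0, Finset.mem_range.mpr (Nat.succ_pos N)⟩
    have hmin : min (f (some n₀)) (s + ε) ≤ s := by
      apply le_ciInf
      intro x
      cases x with
      | none => exact le_trans (min_le_right _ _) (by linarith)
      | some n =>
          by_cases hn : n ≤ N
          · exact le_trans (min_le_left _ _)
              (hn₀ n (Finset.mem_range.mpr (Nat.lt_succ_of_le hn)))
          · exact le_trans (min_le_right _ _) (le_of_lt (hN n (le_of_not_ge hn)))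
    have h1 : f (some n₀) ≤ s := by
      by_contra hcon
      push_neg at hcon
      have := lt_min hcon (by linarith : s < s + ε)
      linarith
    exact ⟨some n₀, le_antisymm h1 (ciInf_le hbdd (some n₀))⟩

lemma witnessed0 : Witnessed A0 R0 := by
  intro C D x
  refine ⟨⟨succ0 x, ?_⟩, ⟨succ0 x, ?_⟩, ?_⟩
  · rw [lukVal0_ex, R0_self]
    unfold lukT
    rw [show (1:ℝ) + lukVal A0 R0 C (succ0 x) - 1 = lukVal A0 R0 C (succ0 x) by ring]
    exact (max_eq_left (lukVal0_mem C (succ0 x)).1).symm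
  · rw [lukVal0_all, R0_self]
    unfold lukImp
    rw [show (1:ℝ) - 1 + lukVal A0 R0 C (succ0 x) = lukVal A0 R0 C (succ0 x) by ring]
    exact (min_eq_left (lukVal0_mem C (succ0 x)).2).symm
  · have := inf_attained (fun y => lukImp (lukVal A0 R0 C y) (lukVal A0 R0 D y))
      (fun y => (lukImp_mem (lukVal0_mem C y) (lukVal0_mem D y)).1)
      (by
        unfold lukImp
        exact ((tendsto_const_nhds.sub (lukVal0_tendsto C)).add (lukVal0_tendsto D)).min
          tendsto_const_nhds)
    obtain ⟨y, hy⟩ := this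
    exact ⟨y, hy.symm⟩

lemma A0_succ (x : Option ℕ) : lukT (A0 (succ0 x)) (A0 (succ0 x)) = A0 x := by
  cases x with
  | none =>
      show lukT (A0 none) (A0 none) = A0 none
      simp only [lukT, A0]
      norm_num
  | some n =>
      show lukT (A0 (some (n+1))) (A0 (some (n+1))) = A0 (some n)
      simp only [lukT, A0]
      have hp : ((1:ℝ)/2)^(n+1+1) = (1/2)^(n+1) * (1/2) := pow_succ _ _
      have h1 : ((1:ℝ)/2)^(n+1) ≤ 1 := by apply pow_le_one₀ <;> norm_num
      rw [max_eq_left (by rw [hp]; linarith)]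
      rw [hp]; ring

lemma modelK2_0 : ModelK2 A0 R0 (some 0) := by
  refine ⟨?_, ?_, ⟨?_, ?_⟩, ⟨?_, ?_⟩⟩
  · show A0 (some 0) = 1/2
    simp only [A0]; norm_num
  · apply lukSub_eq_one_of
    intro x
    rw [lukVal0_ex]
    show lukVal A0 R0 ALCConcept.top x ≤ (1:ℝ)
    exact le_of_eq rfl
  · apply lukSub_eq_one_of
    intro x
    rw [lukVal0_ex, lukVal0_all]
  · apply lukSub_eq_one_of
    intro x
    rw [lukVal0_ex, lukVal0_all]
  · apply lukSub_eq_one_of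
    intro x
    show A0 x ≤ lukT (lukVal A0 R0 (ALCConcept.all ALCConcept.atom) x)
      (lukVal A0 R0 (ALCConcept.all ALCConcept.atom) x)
    rw [lukVal0_all]
    show A0 x ≤ lukT (A0 (succ0 x)) (A0 (succ0 x))
    rw [A0_succ]
  · apply lukSub_eq_one_of
    intro x
    show lukT (lukVal A0 R0 (ALCConcept.all ALCConcept.atom) x)
      (lukVal A0 R0 (ALCConcept.all ALCConcept.atom) x) ≤ A0 x
    rw [lukVal0_all]
    show lukT (A0 (succ0 x)) (A0 (succ0 x)) ≤ A0 x
    rw [A0_succ]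

section Finite
variable {Δ : Type} {A : Δ → ℝ} {R : Δ → Δ → ℝ}

lemma finite_step [Finite Δ] [Nonempty Δ]
    (hA : ∀ x, A x ∈ Set.Icc (0:ℝ) 1) (hR : ∀ x y, R x y ∈ Set.Icc (0:ℝ) 1)
    (h2 : lukSub A R ALCConcept.top (ALCConcept.ex ALCConcept.top) = 1)
    (h3b : lukSub A R (ALCConcept.ex ALCConcept.atom) (ALCConcept.all ALCConcept.atom) = 1)
    (h4a : lukSub A R ALCConcept.atom (ALCConcept.conj (ALCConcept.all ALCConcept.atom) (ALCConcept.all ALCConcept.atom)) = 1)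
    (h4b : lukSub A R (ALCConcept.conj (ALCConcept.all ALCConcept.atom) (ALCConcept.all ALCConcept.atom)) ALCConcept.atom = 1)
    (x : Δ) (hx : 1/2 ≤ A x) : ∃ y, A y = (A x + 1)/2 := by
  -- there is y₁ with R x y₁ = 1
  have hRx : ∀ y, lukT (R x y) (lukVal A R ALCConcept.top y) = R x y := by
    intro y
    show lukT (R x y) 1 = R x y
    unfold lukT
    rw [show R x y + 1 - 1 = R x y by ring]
    exact max_eq_left (hR x y).1
  obtain ⟨y₁, hy₁⟩ := Finite.exists_max (fun y => R x y)
  have hsup : lukVal A R (ALCConcept.ex ALCConcept.top) x ≤ R x y₁ := by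
    show (⨆ y, lukT (R x y) (lukVal A R ALCConcept.top y)) ≤ R x y₁
    exact ciSup_le fun y => by rw [hRx y]; exact hy₁ y
  have h1le := lukSub_le hA hR h2 x
  have hRxy₁ : R x y₁ = 1 := le_antisymm (hR x y₁).2 (le_trans h1le hsup)
  -- the value of ∀R.A at x equals A y₁
  have hbddB : BddBelow (Set.range fun y => lukImp (R x y) (A y)) :=
    ⟨0, by rintro _ ⟨y, rfl⟩; exact (lukImp_mem (hR x y) (hA y)).1⟩
  have hbddA : BddAbove (Set.range fun y => lukT (R x y) (A y)) :=
    ⟨1, by rintro _ ⟨y, rfl⟩; exact (lukT_mem (hR x y) (hA y)).2⟩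
  have hall_le : lukVal A R (ALCConcept.all ALCConcept.atom) x ≤ A y₁ := by
    have := ciInf_le hbddB y₁
    have heq : lukImp (R x y₁) (A y₁) = A y₁ := by
      rw [hRxy₁]; unfold lukImp
      rw [show (1:ℝ) - 1 + A y₁ = A y₁ by ring]
      exact min_eq_left (hA y₁).2
    exact heq ▸ this
  have hex_ge : A y₁ ≤ lukVal A R (ALCConcept.ex ALCConcept.atom) x := by
    have := le_ciSup hbddA y₁
    have heq : lukT (R x y₁) (A y₁) = A y₁ := by
      rw [hRxy₁]; unfold lukT
      rw [show (1:ℝ) + A y₁ - 1 = A y₁ by ring]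
      exact max_eq_left (hA y₁).1
    exact heq ▸ this
  have h3le := lukSub_le hA hR h3b x
  have hall_eq : lukVal A R (ALCConcept.all ALCConcept.atom) x = A y₁ :=
    le_antisymm hall_le (le_trans hex_ge h3le)
  -- axiom 4 : A x = lukT (A y₁) (A y₁)
  have h4 : A x = lukT (A y₁) (A y₁) := by
    have hle1 := lukSub_le hA hR h4a x
    have hle2 := lukSub_le hA hR h4b x
    have hv : lukVal A R (ALCConcept.conj (ALCConcept.all ALCConcept.atom) (ALCConcept.all ALCConcept.atom)) x
        = lukT (A y₁) (A y₁) := by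
      show lukT (lukVal A R (ALCConcept.all ALCConcept.atom) x) (lukVal A R (ALCConcept.all ALCConcept.atom) x) = _
      rw [hall_eq]
    rw [hv] at hle1 hle2
    exact le_antisymm hle1 hle2
  refine ⟨y₁, ?_⟩
  unfold lukT at h4
  rcases max_cases (A y₁ + A y₁ - 1) 0 with ⟨he, _⟩ | ⟨he, _⟩ <;> rw [he] at h4 <;> linarith

lemma no_finite_model : ¬ (∃ (Δ : Type) (A : Δ → ℝ) (R : Δ → Δ → ℝ) (a : Δ),
      Finite Δ ∧ IsInterp A R ∧ ModelK2 A R a) := by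
  rintro ⟨Δ, A, R, a, hfin, ⟨hne, hA, hR⟩, hAa, h2, ⟨h3a, h3b⟩, ⟨h4a, h4b⟩⟩
  haveI : Finite Δ := hfin
  haveI : Nonempty Δ := hne
  have hstep : ∀ x : Δ, ∃ y, 1/2 ≤ A x → A y = (A x + 1)/2 := by
    intro x
    by_cases hx : 1/2 ≤ A x
    · obtain ⟨y, hy⟩ := finite_step hA hR h2 h3b h4a h4b x hx
      exact ⟨y, fun _ => hy⟩
    · exact ⟨x, fun hc => absurd hc hx⟩
  set seq : ℕ → Δ := fun k => Nat.rec a (fun _ x => Classical.choose (hstep x)) k with hseqdef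
  have hseq0 : seq 0 = a := rfl
  have hseqS : ∀ k, seq (k+1) = Classical.choose (hstep (seq k)) := fun k => rfl
  have hval : ∀ k, A (seq k) = 1 - (1/2)^(k+1) := by
    intro k
    induction k with
    | zero => rw [hseq0, hAa]; norm_num
    | succ k ih =>
        have hge : 1/2 ≤ A (seq k) := by
          rw [ih]
          have : ((1:ℝ)/2)^(k+1) ≤ (1/2)^1 := by
            apply pow_le_pow_of_le_one <;> norm_num
          simp at this ⊢
          linarith
        have := Classical.choose_spec (hstep (seq k)) hge
        rw [hseqS k, this, ih, pow_succ]
        ring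
  have hinj : Function.Injective seq := by
    intro j k hjk
    have h1 := hval j
    have h2 := hval k
    rw [hjk] at h1
    rw [h2] at h1
    have hpow : ((1:ℝ)/2)^(k+1) = (1/2)^(j+1) := by linarith
    have := (pow_right_injective₀ (by norm_num : (0:ℝ) < 1/2) (by norm_num : (1:ℝ)/2 ≠ 1)) hpow.symm
    omega
  haveI := Finite.of_injective seq hinj
  exact not_finite ℕ

end Finite


theorem stmt2 :
    (∃ (Δ : Type) (A : Δ → ℝ) (R : Δ → Δ → ℝ) (a : Δ),
      IsInterp A R ∧ Witnessed A R ∧ ModelK2 A R a) ∧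
    ¬ (∃ (Δ : Type) (A : Δ → ℝ) (R : Δ → Δ → ℝ) (a : Δ),
      Finite Δ ∧ IsInterp A R ∧ ModelK2 A R a) := by
  constructor
  · exact ⟨Option ℕ, A0, R0, some 0, ⟨inferInstance, A0_mem, R0_mem⟩, witnessed0, modelK2_0⟩
  · exact no_finite_model
end

section
/- The interpretation I defined by: Δ^I = {1, 2, 3, …} ∪ {∞}; R^I(i, i+1) = 1 for every i ∈ {1,2,3,…}, R^I(∞, ∞) = 1, and R^I(u, v) = 0 for all other pairs; A^I(∞) = 1 and A^I(i) = (2^i − 1)/2^i for every i ∈ {1,2,3,…}; and a^I = 1, is a witnessed interpretation under Łukasiewicz semantics and is a model of the knowledge base K2. -/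
/-- The atomic-concept membership function of the model: `A^I(∞) = 1`,
`A^I(i) = (2^(i+1) - 1)/2^(i+1)` (indices shifted: `some i` is the element `i+1` of the paper). -/
noncomputable def A3 : Option ℕ → ℝ
  | Option.none => 1
  | Option.some i => ((2:ℝ)^(i+1) - 1) / (2:ℝ)^(i+1)

/-- The role membership function of the model: `R^I(i, i+1) = 1`, `R^I(∞,∞) = 1`, else `0`. -/
noncomputable def R3 : Option ℕ → Option ℕ → ℝ
  | Option.some i, Option.some j => if j = i + 1 then 1 else 0
  | Option.none, Option.none => 1
  | _, _ => 0

/-! The role `R3` is the graph of the successor map `i ↦ i + 1`, `∞ ↦ ∞`, so `∃R.C` and `∀R.C`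
both evaluate `C` at the successor. This gives the witnesses for `∃` and `∀` and all axioms of
`K2`, the last pair because `2 A(i+1) - 1 = A(i)`. For subsumption degrees, induction on concepts
shows that the value of every concept at `i` tends to its value at `∞`; hence `x ↦ C(x) ⇒ D(x)` is
continuous on the one-point compactification `ℕ ∪ {∞}` and attains its infimum there. -/

open Filter Topology Set

section Lukasiewicz

variable {a b : ℝ}

lemma lukT_nonneg : 0 ≤ lukT a b := le_max_right _ _

lemma lukT_le_one (ha : a ≤ 1) (hb : b ≤ 1) : lukT a b ≤ 1 :=
  max_le (by linarith) zero_le_one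

lemma lukS_nonneg (ha : 0 ≤ a) (hb : 0 ≤ b) : 0 ≤ lukS a b :=
  le_min (by linarith) zero_le_one

lemma lukS_le_one : lukS a b ≤ 1 := min_le_right _ _

lemma lukImp_nonneg (ha : a ≤ 1) (hb : 0 ≤ b) : 0 ≤ lukImp a b :=
  le_min (by linarith) zero_le_one

lemma lukImp_le_one : lukImp a b ≤ 1 := min_le_right _ _

lemma lukT_one_left (hb : 0 ≤ b) : lukT 1 b = b := by
  rw [lukT, add_sub_cancel_left, max_eq_left hb]

lemma lukT_zero_left (hb : b ≤ 1) : lukT 0 b = 0 :=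
  max_eq_right (by linarith)

lemma lukImp_one_left (hb : b ≤ 1) : lukImp 1 b = b := by
  rw [lukImp, sub_self, zero_add, min_eq_left hb]

lemma lukImp_zero_left (hb : 0 ≤ b) : lukImp 0 b = 1 :=
  min_eq_right (by linarith)

lemma lukImp_eq_one_of_le (h : a ≤ b) : lukImp a b = 1 :=
  min_eq_right (by linarith)

variable {ι : Type*} {l : Filter ι} {f g : ι → ℝ}

lemma Filter.Tendsto.lukT (hf : Tendsto f l (𝓝 a)) (hg : Tendsto g l (𝓝 b)) :
    Tendsto (fun i => _root_.lukT (f i) (g i)) l (𝓝 (_root_.lukT a b)) :=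
  ((hf.add hg).sub_const 1).max tendsto_const_nhds

lemma Filter.Tendsto.lukS (hf : Tendsto f l (𝓝 a)) (hg : Tendsto g l (𝓝 b)) :
    Tendsto (fun i => _root_.lukS (f i) (g i)) l (𝓝 (_root_.lukS a b)) :=
  (hf.add hg).min tendsto_const_nhds

lemma Filter.Tendsto.lukImp (hf : Tendsto f l (𝓝 a)) (hg : Tendsto g l (𝓝 b)) :
    Tendsto (fun i => _root_.lukImp (f i) (g i)) l (𝓝 (_root_.lukImp a b)) :=
  ((tendsto_const_nhds.sub hf).add hg).min tendsto_const_nhds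

end Lukasiewicz

section Interpretation

variable {Δ : Type} {A : Δ → ℝ} {R : Δ → Δ → ℝ}

lemma lukVal_mem_Icc (hA : ∀ x, A x ∈ Icc (0 : ℝ) 1) (hR : ∀ x y, R x y ∈ Icc (0 : ℝ) 1)
    (C : ALCConcept) (x : Δ) : lukVal A R C x ∈ Icc (0 : ℝ) 1 := by
  induction C generalizing x with
  | atom => exact hA x
  | top => simp [lukVal]
  | bot => simp [lukVal]
  | conj C D hC hD => exact ⟨lukT_nonneg, lukT_le_one (hC x).2 (hD x).2⟩
  | disj C D hC hD => exact ⟨lukS_nonneg (hC x).1 (hD x).1, lukS_le_one⟩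
  | neg C hC => exact ⟨by simp [lukVal, (hC x).2], by simp [lukVal, (hC x).1]⟩
  | all C hC =>
    have hbdd : BddBelow (range fun y => lukImp (R x y) (lukVal A R C y)) :=
      ⟨0, forall_mem_range.2 fun y => lukImp_nonneg (hR x y).2 (hC y).1⟩
    exact ⟨Real.iInf_nonneg fun y => lukImp_nonneg (hR x y).2 (hC y).1,
      (ciInf_le hbdd x).trans lukImp_le_one⟩
  | ex C hC =>
    exact ⟨Real.iSup_nonneg fun y => lukT_nonneg,
      Real.iSup_le (fun y => lukT_le_one (hR x y).2 (hC y).2) zero_le_one⟩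

lemma lukSub_eq_one_of_le [Nonempty Δ] {C D : ALCConcept}
    (h : ∀ x, lukVal A R C x ≤ lukVal A R D x) : lukSub A R C D = 1 := by
  simp only [lukSub, lukImp_eq_one_of_le (h _), ciInf_const]

end Interpretation

def graphRole {Δ : Type} [DecidableEq Δ] (f : Δ → Δ) (x y : Δ) : ℝ := if y = f x then 1 else 0

section GraphRole

variable {Δ : Type} [DecidableEq Δ] {A : Δ → ℝ} {f : Δ → Δ}

lemma graphRole_mem_Icc (x y : Δ) : graphRole f x y ∈ Icc (0 : ℝ) 1 := by
  unfold graphRole; split_ifs <;> simp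

lemma graphRole_self (x : Δ) : graphRole f x (f x) = 1 := if_pos rfl

lemma graphRole_of_ne {x y : Δ} (h : y ≠ f x) : graphRole f x y = 0 := if_neg h

variable (hA : ∀ x, A x ∈ Icc (0 : ℝ) 1)
include hA

lemma lukVal_graphRole_mem_Icc (C : ALCConcept) (x : Δ) :
    lukVal A (graphRole f) C x ∈ Icc (0 : ℝ) 1 :=
  lukVal_mem_Icc hA graphRole_mem_Icc C x

lemma lukVal_ex_graphRole (C : ALCConcept) (x : Δ) :
    lukVal A (graphRole f) (.ex C) x = lukVal A (graphRole f) C (f x) := by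
  have hC := lukVal_graphRole_mem_Icc hA (f := f) C
  refine le_antisymm (Real.iSup_le (fun y => ?_) (hC _).1) ?_
  · rcases eq_or_ne y (f x) with rfl | hy
    · rw [graphRole_self, lukT_one_left (hC _).1]
    · rw [graphRole_of_ne hy, lukT_zero_left (hC y).2]; exact (hC _).1
  · have hbdd : BddAbove (range fun y => lukT (graphRole f x y) (lukVal A (graphRole f) C y)) :=
      ⟨1, forall_mem_range.2 fun y => lukT_le_one (graphRole_mem_Icc x y).2 (hC y).2⟩
    calc lukVal A (graphRole f) C (f x)
        = lukT (graphRole f x (f x)) (lukVal A (graphRole f) C (f x)) := by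
          rw [graphRole_self, lukT_one_left (hC _).1]
      _ ≤ _ := le_ciSup hbdd (f x)

lemma lukVal_all_graphRole (C : ALCConcept) (x : Δ) :
    lukVal A (graphRole f) (.all C) x = lukVal A (graphRole f) C (f x) := by
  have hC := lukVal_graphRole_mem_Icc hA (f := f) C
  have : Nonempty Δ := ⟨x⟩
  refine le_antisymm ?_ (le_ciInf fun y => ?_)
  · have hbdd : BddBelow (range fun y => lukImp (graphRole f x y) (lukVal A (graphRole f) C y)) :=
      ⟨0, forall_mem_range.2 fun y => lukImp_nonneg (graphRole_mem_Icc x y).2 (hC y).1⟩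
    calc _ ≤ lukImp (graphRole f x (f x)) (lukVal A (graphRole f) C (f x)) := ciInf_le hbdd (f x)
      _ = _ := by rw [graphRole_self, lukImp_one_left (hC _).2]
  · rcases eq_or_ne y (f x) with rfl | hy
    · rw [graphRole_self, lukImp_one_left (hC _).2]
    · rw [graphRole_of_ne hy, lukImp_zero_left (hC y).1]; exact (hC _).2

end GraphRole

namespace OnePoint

lemma exists_iInf_eq_of_tendsto {h : OnePoint ℕ → ℝ}
    (ht : Tendsto (fun i : ℕ => h i) atTop (𝓝 (h ∞))) : ∃ y, ⨅ x, h x = h y := by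
  obtain ⟨y, -, hy⟩ := isCompact_univ.exists_isMinOn univ_nonempty
    ((OnePoint.continuous_iff_from_nat h).2 ht).continuousOn
  exact ⟨y, le_antisymm (ciInf_le ⟨h y, forall_mem_range.2 fun x => hy (mem_univ x)⟩ y)
    (le_ciInf fun x => hy (mem_univ x))⟩

end OnePoint

section MapSucc

variable {A : Option ℕ → ℝ} (hA : ∀ x, A x ∈ Icc (0 : ℝ) 1)
  (hlim : Tendsto (fun i => A (some i)) atTop (𝓝 (A none)))
include hA hlim

lemma tendsto_lukVal_graphRole_map_succ (C : ALCConcept) :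
    Tendsto (fun i => lukVal A (graphRole (Option.map Nat.succ)) C (some i)) atTop
      (𝓝 (lukVal A (graphRole (Option.map Nat.succ)) C none)) := by
  induction C with
  | atom => exact hlim
  | top => exact tendsto_const_nhds
  | bot => exact tendsto_const_nhds
  | conj C D hC hD => exact hC.lukT hD
  | disj C D hC hD => exact hC.lukS hD
  | neg C hC => exact tendsto_const_nhds.sub hC
  | all C hC =>
    simp only [lukVal_all_graphRole hA]
    exact hC.comp (tendsto_add_atTop_nat 1)
  | ex C hC =>
    simp only [lukVal_ex_graphRole hA]
    exact hC.comp (tendsto_add_atTop_nat 1)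

theorem witnessed_graphRole_map_succ : Witnessed A (graphRole (Option.map Nat.succ)) := by
  have hC := lukVal_graphRole_mem_Icc hA (f := Option.map Nat.succ)
  refine fun C D x => ⟨⟨x.map Nat.succ, ?_⟩, ⟨x.map Nat.succ, ?_⟩, ?_⟩
  · rw [lukVal_ex_graphRole hA, graphRole_self, lukT_one_left (hC C _).1]
  · rw [lukVal_all_graphRole hA, graphRole_self, lukImp_one_left (hC C _).2]
  · exact OnePoint.exists_iInf_eq_of_tendsto
      ((tendsto_lukVal_graphRole_map_succ hA hlim C).lukImp
        (tendsto_lukVal_graphRole_map_succ hA hlim D))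

end MapSucc

lemma R3_eq_graphRole : R3 = graphRole (Option.map Nat.succ) := by
  ext x y
  cases x <;> cases y <;> simp [R3, graphRole]

lemma A3_some (i : ℕ) : A3 (some i) = 1 - (1 / 2) ^ (i + 1) := by
  rw [one_div, inv_pow]
  simp only [A3]
  field_simp

lemma A3_mem_Icc (x : Option ℕ) : A3 x ∈ Icc (0 : ℝ) 1 := by
  cases x with
  | none => simp [A3]
  | some i =>
    rw [A3_some]
    exact ⟨sub_nonneg.2 (pow_le_one₀ (by norm_num) (by norm_num)), by simp⟩

lemma tendsto_A3 : Tendsto (fun i => A3 (some i)) atTop (𝓝 (A3 none)) := by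
  simp only [A3_some]
  simpa [A3] using tendsto_const_nhds.sub
    ((tendsto_pow_atTop_nhds_zero_of_lt_one (r := (1 / 2 : ℝ)) (by norm_num) (by norm_num)).comp
      (tendsto_add_atTop_nat 1))

lemma lukT_A3_map_succ (x : Option ℕ) :
    lukT (A3 (x.map Nat.succ)) (A3 (x.map Nat.succ)) = A3 x := by
  cases x with
  | none => simp [A3, lukT]
  | some i =>
    simp only [Option.map_some, Nat.succ_eq_add_one, A3_some, lukT]
    have : ((1 : ℝ) / 2) ^ (i + 1) ≤ 1 := pow_le_one₀ (by norm_num) (by norm_num)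
    rw [max_eq_left (by rw [pow_succ _ (i + 1)]; linarith)]
    ring

theorem stmt3 :
    IsInterp A3 R3 ∧ Witnessed A3 R3 ∧ ModelK2 A3 R3 (Option.some 0) := by
  rw [R3_eq_graphRole]
  have hex := lukVal_ex_graphRole A3_mem_Icc (f := Option.map Nat.succ)
  have hall := lukVal_all_graphRole A3_mem_Icc (f := Option.map Nat.succ)
  have hconj : ∀ x, lukVal A3 (graphRole (Option.map Nat.succ))
      (.conj (.all .atom) (.all .atom)) x = A3 x := fun x => by
    change lukT (lukVal A3 _ (.all .atom) x) (lukVal A3 _ (.all .atom) x) = A3 x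
    rw [hall, lukVal, lukT_A3_map_succ]
  refine ⟨⟨⟨none⟩, A3_mem_Icc, graphRole_mem_Icc⟩,
    witnessed_graphRole_map_succ A3_mem_Icc tendsto_A3, by norm_num [A3], ?_, ⟨?_, ?_⟩, ?_, ?_⟩
    <;> apply lukSub_eq_one_of_le <;> intro x
  · rw [hex]; rfl
  · rw [hex, hall]
  · rw [hex, hall]
  · exact (hconj x).ge
  · exact (hconj x).le
end
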